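/- arXiv:1803.02219 — 4 statements merged into one kernel-verified Lean document; each statement's English description precedes it below -/
import Mathlib

section
/- Let D ⊆ {0,...,L_x} × {0,...,L_y} ⊆ ℤ² with L_x, L_y ≥ 2 satisfy D + D = {0,...,2L_x} × {0,...,2L_y}. Then D contains all twelve points {(x,y) : x ∈ {1, L_x−1}, y ∈ {0, L_y}} ∪ {(x,y) : x ∈ {0, L_x}, y ∈ {0, 1, L_y−1, L_y}}. -/
/-!
Each of the twelve points `p` is, in one coordinate, a corner coordinate `c` of the box and, in the
other, within distance one of it. Then `p + c` lies in the sum box, hence equals `a + b` with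
`a, b ∈ D`; in each coordinate the summands of an extreme value plus a near-extreme value are forced
to be those two values, so `a = p` or `b = p`.
-/

open Pointwise

theorem Set.mem_of_forall_summands_eq {M : Type*} [Add M] {S : Set M} {s p : M} (hs : s ∈ S + S)
    (h : ∀ a ∈ S, ∀ b ∈ S, a + b = s → a = p ∨ b = p) : p ∈ S := by
  obtain ⟨a, ha, b, hb, rfl⟩ := hs
  rcases h a ha b hb rfl with rfl | rfl <;> assumption

theorem Int.summands_eq_of_add_eq_add_endpoint {L a b c x : ℤ} (ha : 0 ≤ a ∧ a ≤ L)
    (hb : 0 ≤ b ∧ b ≤ L) (hc : c = 0 ∨ c = L) (hx : |x - c| ≤ 1) (h : a + b = x + c) :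
    (a = x ∧ b = c) ∨ (a = c ∧ b = x) := by
  rw [abs_le] at hx
  omega

theorem mem_of_add_corner_mem_add {Lx Ly : ℤ} {D : Set (ℤ × ℤ)}
    (hsub : D ⊆ {q : ℤ × ℤ | 0 ≤ q.1 ∧ q.1 ≤ Lx ∧ 0 ≤ q.2 ∧ q.2 ≤ Ly}) {p c : ℤ × ℤ}
    (hc₁ : c.1 = 0 ∨ c.1 = Lx) (hc₂ : c.2 = 0 ∨ c.2 = Ly)
    (hp₁ : |p.1 - c.1| ≤ 1) (hp₂ : |p.2 - c.2| ≤ 1) (hpc : p.1 = c.1 ∨ p.2 = c.2)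
    (hs : p + c ∈ D + D) : p ∈ D := by
  refine Set.mem_of_forall_summands_eq hs fun a ha b hb hab => ?_
  obtain ⟨ha₁, ha₁', ha₂, ha₂'⟩ := hsub ha
  obtain ⟨hb₁, hb₁', hb₂, hb₂'⟩ := hsub hb
  have h₁ := Int.summands_eq_of_add_eq_add_endpoint ⟨ha₁, ha₁'⟩ ⟨hb₁, hb₁'⟩ hc₁ hp₁
    (congrArg Prod.fst hab)
  have h₂ := Int.summands_eq_of_add_eq_add_endpoint ⟨ha₂, ha₂'⟩ ⟨hb₂, hb₂'⟩ hc₂ hp₂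
    (congrArg Prod.snd hab)
  simp only [Prod.ext_iff]
  omega

/-- Full corner property: all four corners and their boundary
neighbors belong to any array with contiguous sum co-array. -/
theorem stmt_3 (Lx Ly : ℤ) (hLx : 2 ≤ Lx) (hLy : 2 ≤ Ly) (D : Set (ℤ × ℤ))
    (hsub : D ⊆ {p : ℤ × ℤ | 0 ≤ p.1 ∧ p.1 ≤ Lx ∧ 0 ≤ p.2 ∧ p.2 ≤ Ly})
    (hsum : D + D = {p : ℤ × ℤ | 0 ≤ p.1 ∧ p.1 ≤ 2 * Lx ∧ 0 ≤ p.2 ∧ p.2 ≤ 2 * Ly}) :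
    ({p : ℤ × ℤ | (p.1 = 1 ∨ p.1 = Lx - 1) ∧ (p.2 = 0 ∨ p.2 = Ly)} ∪
     {p : ℤ × ℤ | (p.1 = 0 ∨ p.1 = Lx) ∧ (p.2 = 0 ∨ p.2 = 1 ∨ p.2 = Ly - 1 ∨ p.2 = Ly)})
      ⊆ D := by
  rintro ⟨x, y⟩ hp
  simp only [Set.mem_union, Set.mem_ofPred_eq] at hp
  let c : ℤ × ℤ := (if x ≤ 1 then 0 else Lx, if y ≤ 1 then 0 else Ly)
  refine mem_of_add_corner_mem_add (c := c) hsub ?_ ?_ ?_ ?_ ?_ ?_ <;>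
    simp only [c, abs_le, hsum, Prod.fst_add, Prod.snd_add, Set.mem_ofPred_eq] <;>
    split_ifs <;> omega
end

section
/- For L ≥ 2 even, define D₀(L) = {0, L} ∪ {1, 3, 5, ..., L−1} and D₁(L) = {0, 1, L−1, L}. Then D₀(L) + D₁(L) = {0, 1, ..., 2L}. -/
/-!
The odd elements `1, 3, …, L - 1` of `D₀(L)`, shifted by `0` and by `L`, give every odd number in
`[1, 2L - 1]`; shifted by `1` and by `L - 1` they give every even number in `[2, 2L - 2]`. Since `L`
is even, these shifts preserve or flip parity as required. The endpoints are `0 = 0 + 0` and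
`2L = L + L`.
-/

open Pointwise

/-- `D₀(L) = {0, L} ∪ {odd n : 1 ≤ n ≤ L-1}`. -/
def D0 (L : ℤ) : Set ℤ := {0, L} ∪ {n : ℤ | Odd n ∧ 1 ≤ n ∧ n ≤ L - 1}

/-- `D₁(L) = {0, 1, L-1, L}`. -/
def D1 (L : ℤ) : Set ℤ := {0, 1, L - 1, L}

/-- `D₂(L) = {even n : 2 ≤ n ≤ L-2}`. -/
def D2 (L : ℤ) : Set ℤ := {n : ℤ | Even n ∧ 2 ≤ n ∧ n ≤ L - 2}

lemma D0_subset_Icc {L : ℤ} (hL : 0 ≤ L) : D0 L ⊆ Set.Icc 0 L := by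
  rintro n ((rfl | rfl) | ⟨-, h1, h2⟩) <;> constructor <;> omega

lemma D1_subset_Icc {L : ℤ} (hL : 1 ≤ L) : D1 L ⊆ Set.Icc 0 L := by
  rintro n (rfl | rfl | rfl | rfl) <;> constructor <;> omega

lemma D0_add_D1_subset_Icc {L : ℤ} (hL : 1 ≤ L) : D0 L + D1 L ⊆ Set.Icc 0 (2 * L) := by
  calc D0 L + D1 L ⊆ Set.Icc 0 L + Set.Icc 0 L :=
        Set.add_subset_add (D0_subset_Icc (by omega)) (D1_subset_Icc hL)
    _ ⊆ Set.Icc (0 + 0) (L + L) := Set.Icc_add_Icc_subset 0 L 0 L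
    _ = Set.Icc 0 (2 * L) := by rw [add_zero, two_mul]

lemma mem_D0_add_D1_of_sub {L n d : ℤ} (hd : d ∈ D1 L) (hodd : Odd (n - d)) (h1 : 1 ≤ n - d)
    (h2 : n - d ≤ L - 1) : n ∈ D0 L + D1 L :=
  sub_add_cancel n d ▸ Set.add_mem_add (Or.inr ⟨hodd, h1, h2⟩) hd

lemma Icc_subset_D0_add_D1 {L : ℤ} (hE : Even L) : Set.Icc 0 (2 * L) ⊆ D0 L + D1 L := by
  rintro n ⟨h0, h2L⟩
  have hL : L % 2 = 0 := Int.even_iff.mp hE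
  rcases eq_or_ne n 0 with rfl | hn0
  · exact ⟨0, by simp [D0], 0, by simp [D1], zero_add 0⟩
  rcases eq_or_ne n (2 * L) with rfl | hn2L
  · exact ⟨L, by simp [D0], L, by simp [D1], (two_mul L).symm⟩
  rcases Int.emod_two_eq_zero_or_one n with hn | hn
  · by_cases hnL : n ≤ L
    · exact mem_D0_add_D1_of_sub (d := 1) (by simp [D1]) (Int.odd_iff.mpr (by omega))
        (by omega) (by omega)
    · exact mem_D0_add_D1_of_sub (d := L - 1) (by simp [D1]) (Int.odd_iff.mpr (by omega))
        (by omega) (by omega)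
  · by_cases hnL : n ≤ L - 1
    · exact mem_D0_add_D1_of_sub (d := 0) (by simp [D1]) (Int.odd_iff.mpr (by omega))
        (by omega) (by omega)
    · exact mem_D0_add_D1_of_sub (d := L) (by simp [D1]) (Int.odd_iff.mpr (by omega))
        (by omega) (by omega)

/-- `D₀(L) + D₁(L) = {0,…,2L}` for even `L ≥ 2`. -/
theorem stmt_4 (L : ℤ) (hL : 2 ≤ L) (hE : Even L) :
    D0 L + D1 L = {n : ℤ | 0 ≤ n ∧ n ≤ 2 * L} :=
  (D0_add_D1_subset_Icc (by omega)).antisymm (Icc_subset_D0_add_D1 hE)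
end

section
/- For even L ≥ 6, the Concentric Rectangular Array D_CRA ⊆ ℤ² with L_x = L_y = L, defined as the union over i ∈ {0,1,2} of {(d_x, d_y) : d_x ∈ D_i(L), d_y ∈ {i, L−i}} ∪ {(d_x, d_y) : d_x ∈ {i, L−i}, d_y ∈ D_i(L)}, where D₀(L) = {0,L} ∪ {1,3,...,L−1}, D₁(L) = {0,1,L−1,L}, D₂(L) = {2,4,...,L−2}, satisfies D_CRA + D_CRA = {0,...,2L} × {0,...,2L}. -/
/-
For even `L` the array is invariant under the symmetries of the square `[0, L]²`: the swap of
coordinates, and `a ↦ L - a` in either coordinate, since each `D_i(L)` and each pair `{i, L - i}`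
is symmetric about `L / 2`. Hence the sum co-array is invariant under the symmetries of
`[0, 2L]²`, and it suffices to reach the quadrant `[0, L]²`. There every coordinate lies in
`D₀(L) ∪ D₂(L) = [0, L]`, and each of the three cases (up to swap) has an explicit decomposition:
`(x, y) = (x, 0) + (0, y)` on `D₀ × D₀`; on `D₂ × D₀` one uses `(x - 1, y) + (1, 0)`,
`(x - 1, 0) + (1, 1)` or `(x, 2) + (0, y - 2)`; on `D₂ × D₂` one uses `(x - 2, 2) + (2, y - 2)`,
or a sum with `(0, 0)` when a coordinate equals `2`.
-/

open Pointwise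

/-- The square Concentric Rectangular Array (CRA) with `L_x = L_y = L`:
the union over `i ∈ {0,1,2}` of `D_i(L) × {i, L-i}` and `{i, L-i} × D_i(L)`. -/
def CRA (L : ℤ) : Set (ℤ × ℤ) :=
  {p : ℤ × ℤ | (p.1 ∈ D0 L ∧ (p.2 = 0 ∨ p.2 = L)) ∨ ((p.1 = 0 ∨ p.1 = L) ∧ p.2 ∈ D0 L) ∨
    (p.1 ∈ D1 L ∧ (p.2 = 1 ∨ p.2 = L - 1)) ∨ ((p.1 = 1 ∨ p.1 = L - 1) ∧ p.2 ∈ D1 L) ∨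
    (p.1 ∈ D2 L ∧ (p.2 = 2 ∨ p.2 = L - 2)) ∨ ((p.1 = 2 ∨ p.1 = L - 2) ∧ p.2 ∈ D2 L)}

variable {L x y : ℤ}

lemma mem_D0_iff : x ∈ D0 L ↔ x = 0 ∨ x = L ∨ x % 2 = 1 ∧ 1 ≤ x ∧ x ≤ L - 1 := by
  simp only [D0, Set.mem_union, Set.mem_insert_iff, Set.mem_singleton_iff, Set.mem_ofPred_eq,
    Int.odd_iff, or_assoc]

lemma mem_D1_iff : x ∈ D1 L ↔ x = 0 ∨ x = 1 ∨ x = L - 1 ∨ x = L := Iff.rfl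

lemma mem_D2_iff : x ∈ D2 L ↔ x % 2 = 0 ∧ 2 ≤ x ∧ x ≤ L - 2 := by
  simp only [D2, Set.mem_ofPred_eq, Int.even_iff]

lemma zero_mem_D0 : 0 ∈ D0 L := mem_D0_iff.mpr (Or.inl rfl)

lemma mem_D0_or_mem_D2 (hE : Even L) (hx0 : 0 ≤ x) (hxL : x ≤ L) : x ∈ D0 L ∨ x ∈ D2 L := by
  have := Int.even_iff.mp hE
  rw [mem_D0_iff, mem_D2_iff]
  omega

lemma sub_mem_D0 (hE : Even L) (hx : x ∈ D0 L) : L - x ∈ D0 L := by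
  have := Int.even_iff.mp hE
  rw [mem_D0_iff] at hx ⊢
  omega

lemma sub_mem_D1 (hx : x ∈ D1 L) : L - x ∈ D1 L := by
  rw [mem_D1_iff] at hx ⊢
  omega

lemma sub_mem_D2 (hE : Even L) (hx : x ∈ D2 L) : L - x ∈ D2 L := by
  have := Int.even_iff.mp hE
  rw [mem_D2_iff] at hx ⊢
  omega

lemma swap_mem_CRA {p : ℤ × ℤ} (hp : p ∈ CRA L) : p.swap ∈ CRA L := by
  simp only [CRA, Set.mem_ofPred_eq, Prod.fst_swap, Prod.snd_swap] at hp ⊢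
  tauto

lemma sub_fst_mem_CRA (hE : Even L) (h : (x, y) ∈ CRA L) : (L - x, y) ∈ CRA L := by
  simp only [CRA, Set.mem_ofPred_eq] at h ⊢
  rcases h with ⟨hx, hy⟩ | ⟨hx, hy⟩ | ⟨hx, hy⟩ | ⟨hx, hy⟩ | ⟨hx, hy⟩ | ⟨hx, hy⟩
  · exact Or.inl ⟨sub_mem_D0 hE hx, hy⟩
  · exact Or.inr <| Or.inl ⟨by omega, hy⟩
  · exact Or.inr <| Or.inr <| Or.inl ⟨sub_mem_D1 hx, hy⟩
  · exact Or.inr <| Or.inr <| Or.inr <| Or.inl ⟨by omega, hy⟩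
  · exact Or.inr <| Or.inr <| Or.inr <| Or.inr <| Or.inl ⟨sub_mem_D2 hE hx, hy⟩
  · exact Or.inr <| Or.inr <| Or.inr <| Or.inr <| Or.inr ⟨by omega, hy⟩

lemma bounds_of_mem_CRA (hL : 1 ≤ L) {p : ℤ × ℤ} (hp : p ∈ CRA L) :
    0 ≤ p.1 ∧ p.1 ≤ L ∧ 0 ≤ p.2 ∧ p.2 ≤ L := by
  simp only [CRA, mem_D0_iff, mem_D1_iff, mem_D2_iff, Set.mem_ofPred_eq] at hp
  omega

lemma mk_mem_CRA_of_mem_D0 (hx : x ∈ D0 L) (hy : y = 0 ∨ y = L) : (x, y) ∈ CRA L :=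
  Or.inl ⟨hx, hy⟩

lemma one_one_mem_CRA : ((1, 1) : ℤ × ℤ) ∈ CRA L :=
  Or.inr <| Or.inr <| Or.inl ⟨mem_D1_iff.mpr (by omega), Or.inl rfl⟩

lemma mk_two_mem_CRA_of_mem_D2 (hx : x ∈ D2 L) : (x, 2) ∈ CRA L :=
  Or.inr <| Or.inr <| Or.inr <| Or.inr <| Or.inl ⟨hx, Or.inl rfl⟩

lemma CRA_add_CRA_subset (hL : 1 ≤ L) :
    CRA L + CRA L ⊆ {p : ℤ × ℤ | 0 ≤ p.1 ∧ p.1 ≤ 2 * L ∧ 0 ≤ p.2 ∧ p.2 ≤ 2 * L} := by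
  rintro _ ⟨u, hu, v, hv, rfl⟩
  have := bounds_of_mem_CRA hL hu
  have := bounds_of_mem_CRA hL hv
  simp only [Set.mem_ofPred_eq, Prod.fst_add, Prod.snd_add]
  omega

lemma swap_mem_CRA_add_CRA {p : ℤ × ℤ} (hp : p ∈ CRA L + CRA L) :
    p.swap ∈ CRA L + CRA L := by
  obtain ⟨u, hu, v, hv, rfl⟩ := hp
  exact ⟨u.swap, swap_mem_CRA hu, v.swap, swap_mem_CRA hv, rfl⟩

lemma two_mul_sub_fst_mem_CRA_add_CRA (hE : Even L) (h : (x, y) ∈ CRA L + CRA L) :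
    (2 * L - x, y) ∈ CRA L + CRA L := by
  obtain ⟨⟨a, b⟩, hab, ⟨c, d⟩, hcd, h⟩ := h
  obtain ⟨rfl, rfl⟩ := Prod.mk.inj h
  exact ⟨(L - a, b), sub_fst_mem_CRA hE hab, (L - c, d), sub_fst_mem_CRA hE hcd,
    Prod.ext (by simp only [Prod.fst_add]; ring) rfl⟩

lemma two_mul_sub_snd_mem_CRA_add_CRA (hE : Even L) (h : (x, y) ∈ CRA L + CRA L) :
    (x, 2 * L - y) ∈ CRA L + CRA L :=
  swap_mem_CRA_add_CRA (two_mul_sub_fst_mem_CRA_add_CRA hE (swap_mem_CRA_add_CRA h))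

lemma mk_mem_CRA_add_CRA_of_mem_D0_of_mem_D0 (hx : x ∈ D0 L) (hy : y ∈ D0 L) :
    (x, y) ∈ CRA L + CRA L :=
  ⟨(x, 0), mk_mem_CRA_of_mem_D0 hx (Or.inl rfl),
    (0, y), swap_mem_CRA (mk_mem_CRA_of_mem_D0 hy (Or.inl rfl)), by simp⟩

lemma mk_mem_CRA_add_CRA_of_mem_D2_of_mem_D0 (hx : x ∈ D2 L) (hy : y ∈ D0 L) :
    (x, y) ∈ CRA L + CRA L := by
  have hx' := mem_D2_iff.mp hx
  have hx_sub_one : x - 1 ∈ D0 L := mem_D0_iff.mpr (by omega)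
  obtain hy0L | ⟨hy2, hy1, hyL⟩ : (y = 0 ∨ y = L) ∨ _ := by rwa [mem_D0_iff, ← or_assoc] at hy
  · exact ⟨(x - 1, y), mk_mem_CRA_of_mem_D0 hx_sub_one hy0L,
      (1, 0), mk_mem_CRA_of_mem_D0 (mem_D0_iff.mpr (by omega)) (Or.inl rfl), by simp⟩
  obtain rfl | hy3 : y = 1 ∨ 3 ≤ y := by omega
  · exact ⟨(x - 1, 0), mk_mem_CRA_of_mem_D0 hx_sub_one (Or.inl rfl), (1, 1), one_one_mem_CRA,
      by simp⟩
  · exact ⟨(x, 2), mk_two_mem_CRA_of_mem_D2 hx,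
      (0, y - 2), swap_mem_CRA (mk_mem_CRA_of_mem_D0 (mem_D0_iff.mpr (by omega)) (Or.inl rfl)),
      by simp⟩

lemma mk_mem_CRA_add_CRA_of_mem_D2_of_mem_D2 (hx : x ∈ D2 L) (hy : y ∈ D2 L) :
    (x, y) ∈ CRA L + CRA L := by
  have hx' := mem_D2_iff.mp hx
  have hy' := mem_D2_iff.mp hy
  have hzero : ((0, 0) : ℤ × ℤ) ∈ CRA L := mk_mem_CRA_of_mem_D0 zero_mem_D0 (Or.inl rfl)
  obtain rfl | rfl | ⟨hx4, hy4⟩ : x = 2 ∨ y = 2 ∨ 4 ≤ x ∧ 4 ≤ y := by omega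
  · exact ⟨(0, 0), hzero, (2, y), swap_mem_CRA (mk_two_mem_CRA_of_mem_D2 hy), by simp⟩
  · exact ⟨(x, 2), mk_two_mem_CRA_of_mem_D2 hx, (0, 0), hzero, by simp⟩
  · exact ⟨(x - 2, 2), mk_two_mem_CRA_of_mem_D2 (mem_D2_iff.mpr (by omega)),
      (2, y - 2), swap_mem_CRA (mk_two_mem_CRA_of_mem_D2 (mem_D2_iff.mpr (by omega))), by simp⟩

lemma mk_mem_CRA_add_CRA_of_le (hE : Even L) (hx0 : 0 ≤ x) (hxL : x ≤ L) (hy0 : 0 ≤ y)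
    (hyL : y ≤ L) : (x, y) ∈ CRA L + CRA L := by
  rcases mem_D0_or_mem_D2 hE hx0 hxL with hx | hx <;>
    rcases mem_D0_or_mem_D2 hE hy0 hyL with hy | hy
  · exact mk_mem_CRA_add_CRA_of_mem_D0_of_mem_D0 hx hy
  · exact swap_mem_CRA_add_CRA (mk_mem_CRA_add_CRA_of_mem_D2_of_mem_D0 hy hx)
  · exact mk_mem_CRA_add_CRA_of_mem_D2_of_mem_D0 hx hy
  · exact mk_mem_CRA_add_CRA_of_mem_D2_of_mem_D2 hx hy

lemma mk_mem_CRA_add_CRA (hE : Even L) (hx0 : 0 ≤ x) (hx : x ≤ 2 * L) (hy0 : 0 ≤ y)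
    (hy : y ≤ 2 * L) : (x, y) ∈ CRA L + CRA L := by
  wlog hxL : x ≤ L generalizing x
  · simpa using two_mul_sub_fst_mem_CRA_add_CRA hE
      (this (x := 2 * L - x) (by omega) (by omega) (by omega))
  wlog hyL : y ≤ L generalizing y
  · simpa using two_mul_sub_snd_mem_CRA_add_CRA hE
      (this (y := 2 * L - y) (by omega) (by omega) (by omega))
  exact mk_mem_CRA_add_CRA_of_le hE hx0 hxL hy0 hyL

/-- The CRA has a contiguous sum co-array. -/
theorem stmt_7 (L : ℤ) (hL : 6 ≤ L) (hE : Even L) :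
    CRA L + CRA L = {p : ℤ × ℤ | 0 ≤ p.1 ∧ p.1 ≤ 2 * L ∧ 0 ≤ p.2 ∧ p.2 ≤ 2 * L} := by
  refine (CRA_add_CRA_subset (by omega)).antisymm ?_
  rintro ⟨x, y⟩ ⟨hx0, hx, hy0, hy⟩
  exact mk_mem_CRA_add_CRA hE hx0 hx hy0 hy
end

section
/- Let D ⊆ {0,...,L_x} × {0,...,L_y} with L_x, L_y ≥ 2 satisfy D + D = {0,...,2L_x} × {0,...,2L_y}. Then D contains at least 8 unordered pairs of distinct points at Euclidean distance 1 (i.e., S(1) ≥ 8). -/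
/-!
Every point of `{0,…,2Lx} × {0,…,2Ly}` lies in `D + D`. A point next to a corner of this doubled
box, such as `(1, 0) = (0, 0) + (1, 0)`, has only one decomposition as a sum of two points of the
box `{0,…,Lx} × {0,…,Ly}`, so both summands lie in `D`. Hence every corner of the box lies in `D`
together with its two neighbours along the boundary. This gives eight unit-distance pairs, i.e.
sixteen ordered ones, which are distinct because `Lx, Ly ≥ 2`.
-/

open Pointwise

lemma mem_of_add_eq_unique {M : Type*} [Add M] {D B : Set M} (hsub : D ⊆ B) {p q : M}
    (hpq : p + q ∈ D + D)
    (huniq : ∀ a ∈ B, ∀ b ∈ B, a + b = p + q → (a = p ∧ b = q) ∨ (a = q ∧ b = p)) :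
    p ∈ D ∧ q ∈ D := by
  obtain ⟨a, ha, b, hb, hab⟩ := hpq
  rcases huniq a (hsub ha) b (hsub hb) hab with ⟨rfl, rfl⟩ | ⟨rfl, rfl⟩
  exacts [⟨ha, hb⟩, ⟨hb, ha⟩]

def box (Lx Ly : ℤ) : Set (ℤ × ℤ) := {p | 0 ≤ p.1 ∧ p.1 ≤ Lx ∧ 0 ≤ p.2 ∧ p.2 ≤ Ly}

lemma box_finite (Lx Ly : ℤ) : (box Lx Ly).Finite := by
  refine (Set.finite_Icc ((0, 0) : ℤ × ℤ) (Lx, Ly)).subset ?_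
  rintro ⟨x, y⟩ ⟨hx₀, hx, hy₀, hy⟩
  exact ⟨⟨hx₀, hy₀⟩, ⟨hx, hy⟩⟩

def cornerSteps (Lx Ly : ℤ) : List ((ℤ × ℤ) × (ℤ × ℤ)) :=
  [((0, 0), (1, 0)), ((0, 0), (0, 1)), ((Lx, 0), (Lx - 1, 0)), ((Lx, 0), (Lx, 1)),
   ((0, Ly), (1, Ly)), ((0, Ly), (0, Ly - 1)), ((Lx, Ly), (Lx - 1, Ly)), ((Lx, Ly), (Lx, Ly - 1))]

section

variable {Lx Ly : ℤ}

lemma sq_dist_eq_one_of_mem_cornerSteps {pq : (ℤ × ℤ) × (ℤ × ℤ)} (h : pq ∈ cornerSteps Lx Ly) :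
    (pq.1.1 - pq.2.1) ^ 2 + (pq.1.2 - pq.2.2) ^ 2 = 1 := by
  simp only [cornerSteps, List.mem_cons, List.not_mem_nil, or_false] at h
  rcases h with rfl | rfl | rfl | rfl | rfl | rfl | rfl | rfl <;> ring

lemma mem_of_mem_cornerSteps (hLx : 1 ≤ Lx) (hLy : 1 ≤ Ly) {D : Set (ℤ × ℤ)}
    (hsub : D ⊆ box Lx Ly) (hsum : D + D = box (2 * Lx) (2 * Ly))
    {pq : (ℤ × ℤ) × (ℤ × ℤ)} (h : pq ∈ cornerSteps Lx Ly) : pq.1 ∈ D ∧ pq.2 ∈ D := by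
  simp only [cornerSteps, List.mem_cons, List.not_mem_nil, or_false] at h
  refine mem_of_add_eq_unique hsub ?_ ?_
  · rw [hsum]
    rcases h with rfl | rfl | rfl | rfl | rfl | rfl | rfl | rfl <;>
      simp only [box, Set.mem_ofPred_eq, Prod.fst_add, Prod.snd_add] <;> omega
  · rintro ⟨a₁, a₂⟩ ⟨_, _, _, _⟩ ⟨b₁, b₂⟩ ⟨_, _, _, _⟩ hab
    rcases h with rfl | rfl | rfl | rfl | rfl | rfl | rfl | rfl <;>
      simp only [Prod.mk_add_mk, Prod.mk.injEq] at hab ⊢ <;> omega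

lemma nodup_cornerSteps_append_swap (hLx : 2 ≤ Lx) (hLy : 2 ≤ Ly) :
    (cornerSteps Lx Ly ++ (cornerSteps Lx Ly).map Prod.swap).Nodup := by
  simp [cornerSteps, Prod.ext_iff]
  omega

end

/-- Any array with contiguous sum co-array has at least 8 unordered
pairs of distinct points at Euclidean distance `1` (equivalently, at least
`16` ordered pairs; squared distance `1` encodes distance `1`). -/
theorem stmt_15 (Lx Ly : ℤ) (hLx : 2 ≤ Lx) (hLy : 2 ≤ Ly) (D : Set (ℤ × ℤ))
    (hsub : D ⊆ {p : ℤ × ℤ | 0 ≤ p.1 ∧ p.1 ≤ Lx ∧ 0 ≤ p.2 ∧ p.2 ≤ Ly})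
    (hsum : D + D = {p : ℤ × ℤ | 0 ≤ p.1 ∧ p.1 ≤ 2 * Lx ∧ 0 ≤ p.2 ∧ p.2 ≤ 2 * Ly}) :
    2 * 8 ≤ {pq : (ℤ × ℤ) × (ℤ × ℤ) | pq.1 ∈ D ∧ pq.2 ∈ D ∧ pq.1 ≠ pq.2 ∧
      (pq.1.1 - pq.2.1) ^ 2 + (pq.1.2 - pq.2.2) ^ 2 = 1}.ncard := by
  set S := {pq : (ℤ × ℤ) × (ℤ × ℤ) | pq.1 ∈ D ∧ pq.2 ∈ D ∧ pq.1 ≠ pq.2 ∧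
    (pq.1.1 - pq.2.1) ^ 2 + (pq.1.2 - pq.2.2) ^ 2 = 1}
  set steps := cornerSteps Lx Ly ++ (cornerSteps Lx Ly).map Prod.swap
  have hfin : S.Finite :=
    ((box_finite Lx Ly).prod (box_finite Lx Ly)).subset fun pq h => ⟨hsub h.1, hsub h.2.1⟩
  have hstep : ∀ pq ∈ cornerSteps Lx Ly, pq ∈ S := by
    intro pq h
    have hd := sq_dist_eq_one_of_mem_cornerSteps h
    obtain ⟨h₁, h₂⟩ := mem_of_mem_cornerSteps (by omega) (by omega) hsub hsum h
    exact ⟨h₁, h₂, fun he => by simp [he] at hd, hd⟩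
  have hsteps : ↑steps.toFinset ⊆ S := by
    intro pq h
    simp only [steps, Finset.mem_coe, List.mem_toFinset, List.mem_append, List.mem_map] at h
    rcases h with h | ⟨pq, h, rfl⟩
    · exact hstep pq h
    · obtain ⟨h₁, h₂, hne, hd⟩ := hstep pq h
      exact ⟨h₂, h₁, hne.symm, by rw [← hd, Prod.fst_swap, Prod.snd_swap]; ring⟩
  calc 2 * 8 = steps.toFinset.card := by
        rw [List.toFinset_card_of_nodup (nodup_cornerSteps_append_swap hLx hLy)]; rfl
    _ = (↑steps.toFinset : Set _).ncard := (Set.ncard_coe_finset _).symm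
    _ ≤ S.ncard := Set.ncard_le_ncard hsteps hfin
end
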